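/- (Expectation of the smoothed path-graph statistic.) Under the weighted stochastic block model in which each conditional distribution F_{z_1,z_2} admits a density f_{z_1,z_2} that is bounded and twice differentiable with second derivative bounded by B, and with a bounded symmetric kernel k integrating to one with ∫ u² |k(u)| du < ∞, there is a constant C (depending only on B, the bounds on the α's, and the kernel) such that for all x ∈ ℝ and h > 0, and distinct nodes 1, 2, 3, 4, |E(α_{l_1}(X_{1,2}) h⁻¹ k((X_{2,3} − x)/h) α_{l_2}(X_{3,4})) − Σ_{z_1,z_2} (G)_{l_1,z_1} f_{z_1,z_2}(x) p_{z_1} p_{z_2} (G)_{l_2,z_2}| ≤ C h². -/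

import Mathlib

open MeasureTheory

/-- The weighted stochastic block model on `n` nodes with `r` latent communities:
community labels `Z i` are i.i.d. with distribution `p`; edge weights `X i j = X j i`
are, conditionally on the labels, mutually independent with conditional CDF
`F (Z i) (Z j)` (encoded through the joint conditional CDF factorization `X_cond`). -/
structure SBM (Ω : Type) [MeasurableSpace Ω] (ℙ : Measure Ω) (n r : ℕ) where
  /-- the community distribution -/
  p : Fin r → ℝ
  /-- the community labels -/
  Z : Fin n → Ω → Fin r
  /-- the edge weights -/
  X : Fin n → Fin n → Ω → ℝ
  /-- the conditional CDFs -/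
  F : Fin r → Fin r → ℝ → ℝ
  prob : IsProbabilityMeasure ℙ
  p_pos : ∀ z, 0 < p z
  p_sum : ∑ z, p z = 1
  Z_meas : ∀ i, Measurable (Z i)
  X_meas : ∀ i j, Measurable (X i j)
  X_symm : ∀ i j, X i j = X j i
  F_symm : ∀ z₁ z₂, F z₁ z₂ = F z₂ z₁
  /-- the labels are i.i.d. with distribution `p` -/
  Z_iid : ∀ z : Fin n → Fin r,
    ℙ {ω | ∀ i, Z i ω = z i} = ENNReal.ofReal (∏ i, p (z i))
  /-- conditionally on the labels, the edge weights are mutually independent and the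
  conditional CDF of `X i j` given `Z i = z i`, `Z j = z j` is `F (z i) (z j)` -/
  X_cond : ∀ (z : Fin n → Fin r) (S : Finset (Fin n × Fin n)),
    (∀ q ∈ S, q.1 < q.2) → ∀ x : Fin n × Fin n → ℝ,
      ℙ ({ω | ∀ q ∈ S, X q.1 q.2 ω ≤ x q} ∩ {ω | ∀ i, Z i ω = z i})
        = ENNReal.ofReal ((∏ q ∈ S, F (z q.1) (z q.2) (x q)) * ∏ i, p (z i))

/-!
Conditionally on the labels `z`, the weights of distinct edges are independent and `X i j` has
density `f (z i) (z j)`. Hence the expectation of the path statistic is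
`∑ z, P(z) A₁(z i₂, z i₁) J(z i₂, z i₃) A₂(z i₃, z i₄)`, where the `A`s are conditional means of
the `α`s and `J(b, c) = ∫ f b c u h⁻¹ k((u - x) / h) du`; summing out the end labels `z i₁` and
`z i₄` turns the `A`s into the entries of `G`. Finally, after the substitution `u = x + h v`, a
second-order Taylor expansion of `f b c` at `x`, whose linear term integrates to zero by the
symmetry of `k`, gives `|J(b, c) - f b c x| ≤ B h² ∫ v² |k v|`.
-/

open Set Filter

section

-- Kept inside a section: its notation `ℙ` would clash with the binder `ℙ` of the final theorem.
open ProbabilityTheory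

lemma abs_sub_sub_deriv_mul_le {f : ℝ → ℝ} {B : ℝ}
    (hf : Differentiable ℝ f) (hf' : Differentiable ℝ (deriv f))
    (hf'' : ∀ u, |deriv (deriv f) u| ≤ B) (x t : ℝ) :
    |f (x + t) - f x - deriv f x * t| ≤ B * t ^ 2 := by
  have hB : 0 ≤ B := (abs_nonneg _).trans (hf'' 0)
  have hlip : ∀ s, |deriv f (x + s) - deriv f x| ≤ B * |s| := fun s => by
    simpa [Real.norm_eq_abs] using (convex_univ (𝕜 := ℝ)).norm_image_sub_le_of_norm_deriv_le
      (fun u _ => hf' u) (fun u _ => hf'' u) (mem_univ x) (mem_univ (x + s))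
  set g : ℝ → ℝ := fun s => f (x + s) - f x - deriv f x * s
  have hg : ∀ s, HasDerivAt g (deriv f (x + s) - deriv f x) s := fun s => by
    simpa using (((hf (x + s)).hasDerivAt.comp_const_add x s).sub_const (f x)).fun_sub
      ((hasDerivAt_id s).const_mul (deriv f x))
  have hg' : ∀ s ∈ uIcc 0 t, ‖deriv g s‖ ≤ B * |t| := fun s hs => by
    rw [(hg s).deriv, Real.norm_eq_abs]
    exact (hlip s).trans (mul_le_mul_of_nonneg_left (by simpa using abs_sub_left_of_mem_uIcc hs) hB)
  have := (convex_uIcc 0 t).norm_image_sub_le_of_norm_deriv_le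
    (fun s _ => (hg s).differentiableAt) hg' left_mem_uIcc right_mem_uIcc
  simpa [g, Real.norm_eq_abs, mul_assoc, ← sq] using this

lemma integral_mul_eq_zero_of_even {k : ℝ → ℝ} (hk : ∀ u, k (-u) = k u) :
    ∫ v, v * k v = 0 := by
  have := integral_neg_eq_self (fun v => v * k v) volume
  simp only [hk, neg_mul, integral_neg] at this
  linarith

lemma integrable_id_mul_of_sq_mul_abs {k : ℝ → ℝ} (hk : Integrable k)
    (hk₂ : Integrable fun v => v ^ 2 * |k v|) : Integrable fun v => v * k v := by
  refine (hk.abs.add hk₂).mono' (continuous_id.aestronglyMeasurable.mul hk.1) (.of_forall ?_)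
  intro v
  have : |v| ≤ 1 + v ^ 2 := by nlinarith [sq_abs v, sq_nonneg (|v| - 1)]
  simpa [abs_mul, add_mul] using mul_le_mul_of_nonneg_right this (abs_nonneg (k v))

lemma integral_mul_rescaled_kernel (f k : ℝ → ℝ) {h : ℝ} (hh : 0 < h) (x : ℝ) :
    ∫ u, f u * (h⁻¹ * k ((u - x) / h)) = ∫ v, k v * f (x + h * v) := by
  have hshift := integral_add_right_eq_self (μ := volume) (fun u => f u * (h⁻¹ * k ((u - x) / h))) x
  have hscale := Measure.integral_comp_mul_left (fun w => k (w / h) * f (x + w)) h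
  simp only [add_sub_cancel_right, mul_div_cancel_left₀ _ hh.ne', abs_inv,
    abs_of_pos hh, smul_eq_mul] at hshift hscale
  rw [← hshift, hscale, ← integral_const_mul]
  congr 1 with w
  rw [add_comm]; ring

lemma abs_integral_mul_rescaled_kernel_sub_le {f k : ℝ → ℝ} {B : ℝ} (hf_meas : Measurable f)
    (hf : Differentiable ℝ f) (hf' : Differentiable ℝ (deriv f))
    (hf'' : ∀ u, |deriv (deriv f) u| ≤ B)
    (hk_meas : Measurable k) (hk_symm : ∀ u, k (-u) = k u) (hk_one : ∫ u, k u = 1)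
    (hk_mom : Integrable fun u => u ^ 2 * |k u|) {h : ℝ} (hh : 0 < h) (x : ℝ) :
    |(∫ u, f u * (h⁻¹ * k ((u - x) / h))) - f x| ≤ B * (∫ v, v ^ 2 * |k v|) * h ^ 2 := by
  have hk : Integrable k := by
    by_contra hk
    simp [integral_undef hk] at hk_one
  set R : ℝ → ℝ := fun v => f (x + h * v) - f x - deriv f x * (h * v)
  have hR : ∀ v, |k v * R v| ≤ B * h ^ 2 * (v ^ 2 * |k v|) := fun v => by
    rw [abs_mul]
    nlinarith [abs_sub_sub_deriv_mul_le hf hf' hf'' x (h * v), abs_nonneg (k v)]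
  have hR_int : Integrable fun v => k v * R v :=
    (hk_mom.const_mul _).mono' (hk_meas.mul (by fun_prop)).aestronglyMeasurable (.of_forall hR)
  have hlin : Integrable fun v => k v * f x + deriv f x * h * (v * k v) :=
    (hk.mul_const _).add ((integrable_id_mul_of_sq_mul_abs hk hk_mom).const_mul _)
  have hexpand : ∫ v, k v * f (x + h * v) = f x + ∫ v, k v * R v := by
    have hsplit : (fun v => k v * f (x + h * v))
        = fun v => (k v * f x + deriv f x * h * (v * k v)) + k v * R v := by
      ext v
      simp only [R]
      ring
    rw [hsplit, integral_add hlin hR_int, integral_add (hk.mul_const _)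
        ((integrable_id_mul_of_sq_mul_abs hk hk_mom).const_mul _),
      integral_mul_const, integral_const_mul, hk_one, integral_mul_eq_zero_of_even hk_symm]
    ring
  rw [integral_mul_rescaled_kernel f k hh, hexpand, add_sub_cancel_left]
  calc |∫ v, k v * R v| ≤ ∫ v, B * h ^ 2 * (v ^ 2 * |k v|) :=
        (abs_integral_le_integral_abs).trans
          (integral_mono hR_int.abs (hk_mom.const_mul _) hR)
    _ = B * (∫ v, v ^ 2 * |k v|) * h ^ 2 := by rw [integral_const_mul]; ring

lemma eq_withDensity_of_measure_Iic {ν : Measure ℝ} [IsProbabilityMeasure ν] {f : ℝ → ℝ}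
    (hf : 0 ≤ f) (hν : ∀ x, ν (Iic x) = ENNReal.ofReal (∫ u in Iic x, f u)) :
    ν = volume.withDensity fun u => ENNReal.ofReal (f u) := by
  have hint : ∀ x, IntegrableOn f (Iic x) := fun x => by
    -- `ν (Iic y)` tends to `1`, so for large `y` the integral over `Iic y` is not a junk zero.
    obtain ⟨y, hy, hxy⟩ := (((tendsto_measure_Iic_atTop ν).eventually_ne
      (by simp : ν univ ≠ 0)).and (eventually_ge_atTop x)).exists
    refine IntegrableOn.mono_set ?_ (Iic_subset_Iic.2 hxy)
    by_contra hfy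
    simp [hν, integral_undef hfy] at hy
  refine Measure.ext_of_Iic _ _ fun x => ?_
  rw [hν, withDensity_apply _ measurableSet_Iic,
    ofReal_integral_eq_lintegral_ofReal (hint x) (.of_forall fun u => hf u)]

lemma integral_eq_integral_mul_of_measure_Iic {ν : Measure ℝ} [IsProbabilityMeasure ν]
    {f : ℝ → ℝ} (hf_meas : Measurable f) (hf : 0 ≤ f)
    (hν : ∀ x, ν (Iic x) = ENNReal.ofReal (∫ u in Iic x, f u)) (g : ℝ → ℝ) :
    ∫ y, g y ∂ν = ∫ u, f u * g u := by
  rw [eq_withDensity_of_measure_Iic hf hν, integral_withDensity_eq_integral_toReal_smul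
    hf_meas.ennreal_ofReal (.of_forall fun _ => ENNReal.ofReal_lt_top)]
  simp [ENNReal.toReal_ofReal (hf _)]

lemma iIndepFun_of_measure_biInter_Iic {ι Ω : Type*} [MeasurableSpace Ω] {μ : Measure Ω}
    {X : ι → Ω → ℝ} (hX : ∀ i, Measurable (X i))
    (h : ∀ (s : Finset ι) (x : ι → ℝ),
      μ (⋂ i ∈ s, X i ⁻¹' Iic (x i)) = ∏ i ∈ s, μ (X i ⁻¹' Iic (x i))) :
    iIndepFun X μ := by
  rw [iIndepFun_iff_iIndep]
  refine iIndepSets.iIndep (fun i => (hX i).comap_le) (fun i => preimage (X i) '' range Iic)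
    (fun i => isPiSystem_Iic.comap (X i)) (fun i => ?_) ?_
  · rw [BorelSpace.measurable_eq (α := ℝ), borel_eq_generateFrom_Iic,
      MeasurableSpace.comap_generateFrom]
  · rw [iIndepSets_iff]
    intro s t ht
    have : ∀ i ∈ s, ∃ a, X i ⁻¹' Iic a = t i := fun i hi => by
      obtain ⟨_, ⟨a, rfl⟩, hta⟩ := ht i hi
      exact ⟨a, hta⟩
    choose! a ha using this
    rw [← Finset.prod_congr rfl fun i hi => congrArg μ (ha i hi), ← h s a,
      iInter₂_congr fun i hi => ha i hi]

lemma ProbabilityTheory.iIndepFun.integral_comp_mul_comp_mul_comp {Ω ι : Type*}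
    [MeasurableSpace Ω] {μ : Measure Ω} {X : ι → Ω → ℝ} (hX : iIndepFun X μ)
    (hXm : ∀ i, Measurable (X i)) {i j k : ι} (hij : i ≠ j) (hik : i ≠ k) (hjk : j ≠ k)
    {g₁ g₂ g₃ : ℝ → ℝ} (hg₁ : Measurable g₁) (hg₂ : Measurable g₂) (hg₃ : Measurable g₃) :
    ∫ ω, g₁ (X i ω) * g₂ (X j ω) * g₃ (X k ω) ∂μ
      = (∫ ω, g₁ (X i ω) ∂μ) * (∫ ω, g₂ (X j ω) ∂μ) * ∫ ω, g₃ (X k ω) ∂μ := by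
  have hinj : Function.Injective ![i, j, k] := by
    intro a b; fin_cases a <;> fin_cases b <;> simp_all [eq_comm]
  have hg : ∀ m, Measurable (![g₁, g₂, g₃] m) := fun m => by
    fin_cases m <;> assumption
  have := (hX.precomp hinj).integral_fun_prod_comp (fun m => (hXm _).aemeasurable)
    fun m => (hg m).aestronglyMeasurable
  simpa [Fin.prod_univ_three, mul_assoc] using this

lemma integral_eq_sum_measureReal_mul_integral_cond {Ω α : Type*} [MeasurableSpace Ω]
    [Fintype α] [MeasurableSpace α] [DiscreteMeasurableSpace α] {μ : Measure Ω}
    [IsFiniteMeasure μ] {X : Ω → α} (hX : Measurable X) {Φ : Ω → ℝ} (hΦ : Integrable Φ μ) :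
    ∫ ω, Φ ω ∂μ = ∑ x, μ.real (X ⁻¹' {x}) * ∫ ω, Φ ω ∂μ[|X ← x] := by
  have hμ := sum_meas_smul_cond_fiber hX μ
  rw [← hμ] at hΦ
  conv_lhs => rw [← hμ]
  rw [integral_finsetSum_measure fun x _ => integrable_finsetSum_measure.1 hΦ x (Finset.mem_univ x)]
  simp [integral_smul_measure, measureReal_def]

section

variable {ι α R : Type*} [Fintype ι] [DecidableEq ι] [Fintype α] [CommSemiring R] {w : α → R}

lemma sum_prod_mul_comp_of_injective {κ : Type*} [Fintype κ] [DecidableEq κ]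
    (hw : ∑ a, w a = 1) {e : κ → ι} (he : e.Injective) (g : (κ → α) → R) :
    ∑ z : ι → α, (∏ i, w (z i)) * g (z ∘ e) = ∑ y : κ → α, (∏ j, w (y j)) * g y := by
  classical
  rw [← Finset.sum_fiberwise Finset.univ (· ∘ e)]
  refine Fintype.sum_congr _ _ fun y => ?_
  let t : ι → Finset α := fun i => {a | ∀ j, e j = i → a = y j}
  have hfiber : ({z | z ∘ e = y} : Finset (ι → α)) = Fintype.piFinset t := by
    ext z
    simp only [Finset.mem_filter, Finset.mem_univ, true_and, funext_iff, Function.comp_apply,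
      Fintype.mem_piFinset, t]
    exact ⟨fun h i j hj => hj ▸ h j, fun h j => h _ j rfl⟩
  have ht_range : ∀ j, t (e j) = {y j} := fun j => by
    ext a
    simp [t, he.eq_iff]
  have ht_compl : ∀ i ∉ range e, t i = Finset.univ := fun i hi => by
    ext a
    simp only [mem_range, not_exists] at hi
    simp [t, hi]
  rw [Finset.sum_congr rfl fun z hz => by rw [(Finset.mem_filter.1 hz).2], ← Finset.sum_mul,
    hfiber, ← Finset.prod_univ_sum]
  congr 1
  exact (Fintype.prod_of_injective e he _ _ (fun i hi => by rw [ht_compl i hi, hw])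
    fun j => by rw [ht_range, Finset.sum_singleton]).symm

lemma sum_prod_mul_apply₂ (hw : ∑ a, w a = 1) {i j : ι} (hij : i ≠ j) (g : α → α → R) :
    ∑ z : ι → α, (∏ k, w (z k)) * g (z i) (z j) = ∑ a, ∑ b, w a * w b * g a b := by
  have he : Function.Injective ![i, j] := by
    intro a b; fin_cases a <;> fin_cases b <;> simp_all [eq_comm]
  refine (sum_prod_mul_comp_of_injective hw he fun y => g (y 0) (y 1)).trans ?_
  simp only [← (Fin.consEquiv fun _ => α).sum_comp, Fintype.sum_prod_type]
  simp [Fin.prod_univ_succ, mul_assoc]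

lemma sum_prod_mul_apply₄ (hw : ∑ a, w a = 1) {i₁ i₂ i₃ i₄ : ι} (h₁₂ : i₁ ≠ i₂) (h₁₃ : i₁ ≠ i₃)
    (h₁₄ : i₁ ≠ i₄) (h₂₃ : i₂ ≠ i₃) (h₂₄ : i₂ ≠ i₄) (h₃₄ : i₃ ≠ i₄) (g : α → α → α → α → R) :
    ∑ z : ι → α, (∏ k, w (z k)) * g (z i₁) (z i₂) (z i₃) (z i₄)
      = ∑ a, ∑ b, ∑ c, ∑ d, w a * w b * w c * w d * g a b c d := by
  have he : Function.Injective ![i₁, i₂, i₃, i₄] := by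
    intro a b; fin_cases a <;> fin_cases b <;> simp_all [eq_comm]
  refine (sum_prod_mul_comp_of_injective hw he fun y => g (y 0) (y 1) (y 2) (y 3)).trans ?_
  simp only [← (Fin.consEquiv fun _ => α).sum_comp, Fintype.sum_prod_type]
  simp [Fin.prod_univ_succ, mul_assoc]
  rfl

lemma sum_prod_mul_path (hw : ∑ a, w a = 1) {i₁ i₂ i₃ i₄ : ι} (h₁₂ : i₁ ≠ i₂) (h₁₃ : i₁ ≠ i₃)
    (h₁₄ : i₁ ≠ i₄) (h₂₃ : i₂ ≠ i₃) (h₂₄ : i₂ ≠ i₄) (h₃₄ : i₃ ≠ i₄) (A J A' : α → α → R) :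
    ∑ z : ι → α, (∏ k, w (z k)) * (A (z i₂) (z i₁) * J (z i₂) (z i₃) * A' (z i₃) (z i₄))
      = ∑ b, ∑ c, w b * w c * ((∑ a, w a * A b a) * J b c * ∑ d, w d * A' c d) := by
  rw [sum_prod_mul_apply₄ hw h₁₂ h₁₃ h₁₄ h₂₃ h₂₄ h₃₄ fun a b c d => A b a * J b c * A' c d]
  simp only [Finset.mul_sum, Finset.sum_mul]
  conv_lhs => rw [Finset.sum_comm]
  refine Finset.sum_congr rfl fun b _ => ?_
  conv_lhs => rw [Finset.sum_comm]
  refine Finset.sum_congr rfl fun c _ => ?_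
  conv_lhs => rw [Finset.sum_comm]
  exact Finset.sum_congr rfl fun d _ => Finset.sum_congr rfl fun a _ => by ring

lemma abs_sum_sum_mul_sub_le {κ : Type*} [Fintype κ] {p : κ → ℝ} (hp : ∀ b, 0 ≤ p b)
    (u v : κ → ℝ) {J F : κ → κ → ℝ} {ε : ℝ} (hJF : ∀ b c, |J b c - F b c| ≤ ε) :
    |∑ b, ∑ c, p b * p c * (u b * J b c * v c) - ∑ b, ∑ c, u b * F b c * p b * p c * v c|
      ≤ (∑ b, ∑ c, p b * p c * |u b| * |v c|) * ε := by
  simp only [← Finset.sum_sub_distrib, Finset.sum_mul]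
  refine (Finset.abs_sum_le_sum_abs _ _).trans (Finset.sum_le_sum fun b _ =>
    (Finset.abs_sum_le_sum_abs _ _).trans (Finset.sum_le_sum fun c _ => ?_))
  calc |p b * p c * (u b * J b c * v c) - u b * F b c * p b * p c * v c|
      = |p b * p c * u b * v c * (J b c - F b c)| := by congr 1; ring
    _ = p b * p c * |u b| * |v c| * |J b c - F b c| := by
        simp only [abs_mul, abs_of_nonneg (hp b), abs_of_nonneg (hp c)]
    _ ≤ p b * p c * |u b| * |v c| * ε := by
        have := hp b
        have := hp c
        exact mul_le_mul_of_nonneg_left (hJF b c) (by positivity)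

end

def orderedEdge {n : ℕ} {i j : Fin n} (hij : i ≠ j) : {q : Fin n × Fin n // q.1 < q.2} :=
  ⟨(min i j, max i j), min_lt_max.2 hij⟩

lemma sym2_orderedEdge {n : ℕ} {i j : Fin n} (hij : i ≠ j) :
    s((orderedEdge hij).1.1, (orderedEdge hij).1.2) = s(i, j) := by
  rcases le_total i j with h | h
  · simp [orderedEdge, h]
  · simp [orderedEdge, h, Sym2.eq_swap]

namespace SBM

variable {Ω : Type} [MeasurableSpace Ω] {μ : Measure Ω} {n r : ℕ} (sbm : SBM Ω μ n r)

def labels (ω : Ω) : Fin n → Fin r := fun i => sbm.Z i ω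

lemma measurable_labels : Measurable sbm.labels := measurable_pi_lambda _ sbm.Z_meas

lemma labels_preimage_singleton (z : Fin n → Fin r) :
    sbm.labels ⁻¹' {z} = {ω | ∀ i, sbm.Z i ω = z i} := by
  ext ω
  simp [labels, funext_iff]

lemma measureReal_labels_preimage (z : Fin n → Fin r) :
    μ.real (sbm.labels ⁻¹' {z}) = ∏ i, sbm.p (z i) := by
  rw [measureReal_def, labels_preimage_singleton, sbm.Z_iid,
    ENNReal.toReal_ofReal (Finset.prod_nonneg fun i _ => (sbm.p_pos _).le)]

lemma measure_labels_preimage_ne_zero (z : Fin n → Fin r) : μ (sbm.labels ⁻¹' {z}) ≠ 0 := by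
  rw [labels_preimage_singleton, sbm.Z_iid]
  simpa using Finset.prod_pos fun i _ => sbm.p_pos (z i)

instance isProbabilityMeasure_cond_labels (z : Fin n → Fin r) :
    IsProbabilityMeasure μ[|sbm.labels ⁻¹' {z}] :=
  have := sbm.prob
  cond_isProbabilityMeasure (sbm.measure_labels_preimage_ne_zero z)

lemma integral_eq_sum_labels {Φ : Ω → ℝ} (hΦ : Integrable Φ μ) :
    ∫ ω, Φ ω ∂μ = ∑ z, (∏ i, sbm.p (z i)) * ∫ ω, Φ ω ∂μ[|sbm.labels ⁻¹' {z}] := by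
  have := sbm.prob
  simp_rw [integral_eq_sum_measureReal_mul_integral_cond sbm.measurable_labels hΦ,
    measureReal_labels_preimage]

lemma cond_labels_apply_forall_le (z : Fin n → Fin r) (S : Finset (Fin n × Fin n))
    (hS : ∀ q ∈ S, q.1 < q.2) (x : Fin n × Fin n → ℝ) :
    μ[{ω | ∀ q ∈ S, sbm.X q.1 q.2 ω ≤ x q} | sbm.labels ⁻¹' {z}]
      = ENNReal.ofReal (∏ q ∈ S, sbm.F (z q.1) (z q.2) (x q)) := by
  have hP : 0 < ∏ i, sbm.p (z i) := Finset.prod_pos fun i _ => sbm.p_pos (z i)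
  rw [cond_apply (sbm.measurable_labels (measurableSet_singleton z)), inter_comm,
    labels_preimage_singleton, sbm.X_cond z S hS x, sbm.Z_iid, ENNReal.ofReal_mul' hP.le,
    mul_comm, mul_assoc, ENNReal.mul_inv_cancel (by simpa using hP) ENNReal.ofReal_ne_top,
    mul_one]

lemma cond_labels_apply_X_le {i j : Fin n} (hij : i ≠ j) (z : Fin n → Fin r) (x : ℝ) :
    μ[sbm.X i j ⁻¹' Iic x | sbm.labels ⁻¹' {z}] = ENNReal.ofReal (sbm.F (z i) (z j) x) := by
  wlog h : i < j generalizing i j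
  · rw [sbm.X_symm, sbm.F_symm]
    exact this hij.symm (lt_of_le_of_ne (not_lt.1 h) hij.symm)
  simpa [preimage] using sbm.cond_labels_apply_forall_le z {(i, j)} (by simpa) fun _ => x

lemma iIndepFun_cond_labels (hF : ∀ a b x, 0 ≤ sbm.F a b x) (z : Fin n → Fin r) :
    iIndepFun (fun q : {q : Fin n × Fin n // q.1 < q.2} => sbm.X q.1.1 q.1.2)
      μ[|sbm.labels ⁻¹' {z}] := by
  refine iIndepFun_of_measure_biInter_Iic (fun q => sbm.X_meas _ _) fun s x => ?_
  let x' : Fin n × Fin n → ℝ := fun q => if h : q.1 < q.2 then x ⟨q, h⟩ else 0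
  have hx' : ∀ q : {q : Fin n × Fin n // q.1 < q.2}, x' q = x q := fun q => dif_pos q.2
  have := sbm.cond_labels_apply_forall_le z (s.map (Function.Embedding.subtype _))
    (by simp +contextual) x'
  simp only [Finset.mem_map, Function.Embedding.subtype_apply, Finset.prod_map, hx'] at this
  rw [Finset.prod_congr rfl fun q _ => sbm.cond_labels_apply_X_le q.2.ne z (x q),
    ← ENNReal.ofReal_prod_of_nonneg fun q _ => hF _ _ _, ← this]
  congr 1
  ext ω
  simp only [mem_iInter, mem_preimage, mem_Iic, mem_ofPred_eq, forall_exists_index, and_imp,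
    forall_apply_eq_imp_iff₂, hx']

lemma X_orderedEdge {i j : Fin n} (hij : i ≠ j) :
    sbm.X (orderedEdge hij).1.1 (orderedEdge hij).1.2 = sbm.X i j := by
  rcases le_total i j with h | h
  · simp [orderedEdge, h]
  · simp [orderedEdge, h, sbm.X_symm j i]

structure HasDensity (f : Fin r → Fin r → ℝ → ℝ) : Prop where
  measurable : ∀ a b, Measurable (f a b)
  nonneg : ∀ a b u, 0 ≤ f a b u
  cdf_eq : ∀ a b x, sbm.F a b x = ∫ u in Iic x, f a b u

variable {sbm} {f : Fin r → Fin r → ℝ → ℝ}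

lemma HasDensity.integral_cond_labels_comp_X (hf : sbm.HasDensity f) {i j : Fin n} (hij : i ≠ j)
    (z : Fin n → Fin r) {g : ℝ → ℝ} (hg : Measurable g) :
    ∫ ω, g (sbm.X i j ω) ∂μ[|sbm.labels ⁻¹' {z}] = ∫ u, f (z i) (z j) u * g u := by
  rw [← integral_map (sbm.X_meas i j).aemeasurable hg.aestronglyMeasurable]
  have := Measure.isProbabilityMeasure_map (μ := μ[|sbm.labels ⁻¹' {z}])
    (sbm.X_meas i j).aemeasurable
  refine integral_eq_integral_mul_of_measure_Iic (hf.measurable _ _) (hf.nonneg _ _)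
    (fun x => ?_) g
  rw [Measure.map_apply (sbm.X_meas i j) measurableSet_Iic, sbm.cond_labels_apply_X_le hij,
    hf.cdf_eq]

lemma HasDensity.integral_cond_labels_mul_mul (hf : sbm.HasDensity f) {i₁ j₁ i₂ j₂ i₃ j₃ : Fin n}
    (h₁ : i₁ ≠ j₁) (h₂ : i₂ ≠ j₂) (h₃ : i₃ ≠ j₃) (h₁₂ : s(i₁, j₁) ≠ s(i₂, j₂))
    (h₁₃ : s(i₁, j₁) ≠ s(i₃, j₃)) (h₂₃ : s(i₂, j₂) ≠ s(i₃, j₃)) (z : Fin n → Fin r)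
    {g₁ g₂ g₃ : ℝ → ℝ} (hg₁ : Measurable g₁) (hg₂ : Measurable g₂) (hg₃ : Measurable g₃) :
    ∫ ω, g₁ (sbm.X i₁ j₁ ω) * g₂ (sbm.X i₂ j₂ ω) * g₃ (sbm.X i₃ j₃ ω) ∂μ[|sbm.labels ⁻¹' {z}]
      = (∫ u, f (z i₁) (z j₁) u * g₁ u) * (∫ u, f (z i₂) (z j₂) u * g₂ u)
          * ∫ u, f (z i₃) (z j₃) u * g₃ u := by
  have hF : ∀ a b x, 0 ≤ sbm.F a b x := fun a b x => by
    rw [hf.cdf_eq]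
    exact setIntegral_nonneg measurableSet_Iic fun u _ => hf.nonneg a b u
  have hne : ∀ {i j k l : Fin n} (hij : i ≠ j) (hkl : k ≠ l), s(i, j) ≠ s(k, l) →
      orderedEdge hij ≠ orderedEdge hkl := fun hij hkl h he => by
    rw [← sym2_orderedEdge hij, ← sym2_orderedEdge hkl, he] at h
    exact h rfl
  have := (sbm.iIndepFun_cond_labels hF z).integral_comp_mul_comp_mul_comp
    (fun q => sbm.X_meas _ _) (hne h₁ h₂ h₁₂) (hne h₁ h₃ h₁₃) (hne h₂ h₃ h₂₃) hg₁ hg₂ hg₃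
  simp only [X_orderedEdge] at this
  rw [this, hf.integral_cond_labels_comp_X h₁ z hg₁, hf.integral_cond_labels_comp_X h₂ z hg₂,
    hf.integral_cond_labels_comp_X h₃ z hg₃]

lemma HasDensity.setIntegral_Z_eq (hf : sbm.HasDensity f) {i j : Fin n} (hij : i ≠ j) (a : Fin r)
    {g : ℝ → ℝ} (hg : Measurable g) {C : ℝ} (hC : ∀ u, |g u| ≤ C) :
    ∫ ω in {ω | sbm.Z i ω = a}, g (sbm.X i j ω) ∂μ
      = sbm.p a * ∑ b, sbm.p b * ∫ u, f a b u * g u := by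
  have := sbm.prob
  have hS : MeasurableSet {ω | sbm.Z i ω = a} := sbm.Z_meas i (measurableSet_singleton a)
  have hcond : ∀ z : Fin n → Fin r,
      ∫ ω, {ω | sbm.Z i ω = a}.indicator (fun ω => g (sbm.X i j ω)) ω ∂μ[|sbm.labels ⁻¹' {z}]
        = if z i = a then ∫ u, f (z i) (z j) u * g u else 0 := fun z => by
    have hz : ∀ᵐ ω ∂μ[|sbm.labels ⁻¹' {z}], sbm.labels ω = z :=
      ae_cond_mem (sbm.measurable_labels (measurableSet_singleton z))
    rw [integral_congr_ae (g := fun ω => if z i = a then g (sbm.X i j ω) else 0)]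
    · split_ifs
      · exact hf.integral_cond_labels_comp_X hij z hg
      · exact integral_zero _ _
    · filter_upwards [hz] with ω hω
      simp [indicator, ← hω, labels]
  have hint : Integrable ({ω | sbm.Z i ω = a}.indicator fun ω => g (sbm.X i j ω)) μ :=
    (Integrable.of_bound (hg.comp (sbm.X_meas i j)).aestronglyMeasurable C
      (.of_forall fun ω => hC _)).indicator hS
  rw [← integral_indicator hS, sbm.integral_eq_sum_labels hint,
    Finset.sum_congr rfl fun z _ => by rw [hcond z]]
  refine (sum_prod_mul_apply₂ sbm.p_sum hij
    fun a' b => if a' = a then ∫ u, f a' b u * g u else 0).trans ?_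
  simp [mul_ite, Finset.mul_sum, mul_assoc]

lemma HasDensity.integral_eq_one (hf : sbm.HasDensity f) {i j : Fin n} (hij : i ≠ j)
    (a b : Fin r) : ∫ u, f a b u = 1 := by
  have := sbm.prob
  let z : Fin n → Fin r := Function.update (fun _ => b) i a
  have := hf.integral_cond_labels_comp_X (μ := μ) hij z (g := fun _ => 1) measurable_const
  simpa [z, hij.symm] using this.symm

lemma HasDensity.setIntegral_Z_div_measure_eq (hf : sbm.HasDensity f) {i j : Fin n}
    (hij : i ≠ j) (a : Fin r) {g : ℝ → ℝ} (hg : Measurable g) {C : ℝ} (hC : ∀ u, |g u| ≤ C) :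
    (∫ ω in {ω | sbm.Z i ω = a}, g (sbm.X i j ω) ∂μ) / (μ {ω | sbm.Z i ω = a}).toReal
      = ∑ b, sbm.p b * ∫ u, f a b u * g u := by
  have hμ : (μ {ω | sbm.Z i ω = a}).toReal = sbm.p a := by
    simpa [hf.integral_eq_one hij, sbm.p_sum, measureReal_def] using
      hf.setIntegral_Z_eq hij a (g := fun _ => 1) measurable_const (C := 1) (by simp)
  rw [hμ, hf.setIntegral_Z_eq hij a hg hC, mul_div_cancel_left₀ _ (sbm.p_pos a).ne']

lemma HasDensity.integral_path_eq (hf : sbm.HasDensity f) {i₁ i₂ i₃ i₄ : Fin n}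
    (h₁₂ : i₁ ≠ i₂) (h₁₃ : i₁ ≠ i₃) (h₁₄ : i₁ ≠ i₄) (h₂₃ : i₂ ≠ i₃) (h₂₄ : i₂ ≠ i₄)
    (h₃₄ : i₃ ≠ i₄) {g₁ g₂ g₃ : ℝ → ℝ} (hg₁ : Measurable g₁) (hg₂ : Measurable g₂)
    (hg₃ : Measurable g₃) {C₁ C₂ C₃ : ℝ} (hC₁ : ∀ u, |g₁ u| ≤ C₁) (hC₂ : ∀ u, |g₂ u| ≤ C₂)
    (hC₃ : ∀ u, |g₃ u| ≤ C₃) :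
    ∫ ω, g₁ (sbm.X i₁ i₂ ω) * g₂ (sbm.X i₂ i₃ ω) * g₃ (sbm.X i₃ i₄ ω) ∂μ
      = ∑ b, ∑ c, sbm.p b * sbm.p c * ((∑ a, sbm.p a * ∫ u, f b a u * g₁ u)
          * (∫ u, f b c u * g₂ u) * ∑ d, sbm.p d * ∫ u, f c d u * g₃ u) := by
  have := sbm.prob
  have hint : Integrable
      (fun ω => g₁ (sbm.X i₁ i₂ ω) * g₂ (sbm.X i₂ i₃ ω) * g₃ (sbm.X i₃ i₄ ω)) μ := by
    refine .of_bound (((hg₁.comp (sbm.X_meas _ _)).mul (hg₂.comp (sbm.X_meas _ _))).mul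
      (hg₃.comp (sbm.X_meas _ _))).aestronglyMeasurable (C₁ * C₂ * C₃) (.of_forall fun ω => ?_)
    have := (abs_nonneg _).trans (hC₁ 0)
    have := (abs_nonneg _).trans (hC₂ 0)
    simp only [norm_mul, Real.norm_eq_abs]
    gcongr <;> apply_assumption
  -- Orient the first edge away from `i₂`: summing out `z i₁` then gives a conditional mean
  -- given the label of `i₂`, as in `setIntegral_Z_div_measure_eq`.
  rw [sbm.integral_eq_sum_labels hint, sbm.X_symm i₁ i₂,
    Finset.sum_congr rfl fun z _ => by
      rw [hf.integral_cond_labels_mul_mul h₁₂.symm h₂₃ h₃₄ (by simp [h₁₂, h₁₃])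
        (by simp [h₁₄, h₂₃, h₂₄]) (by simp [h₂₃, h₂₄, h₃₄]) z hg₁ hg₂ hg₃]]
  exact sum_prod_mul_path sbm.p_sum h₁₂ h₁₃ h₁₄ h₂₃ h₂₄ h₃₄ (fun b a => ∫ u, f b a u * g₁ u)
    (fun b c => ∫ u, f b c u * g₂ u) (fun c d => ∫ u, f c d u * g₃ u)

end SBM

end

theorem smoothed_path_graph_expectation_general
    {Ω : Type} [MeasurableSpace Ω] {ℙ : Measure Ω} {n r l : ℕ}
    (sbm : SBM Ω ℙ n r)
    (f : Fin r → Fin r → ℝ → ℝ) (B : ℝ)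
    (hf_density : ∀ z₁ z₂ x, sbm.F z₁ z₂ x = ∫ u in Set.Iic x, f z₁ z₂ u)
    (hf_meas : ∀ z₁ z₂, Measurable (f z₁ z₂))
    (hf_nonneg : ∀ z₁ z₂ u, 0 ≤ f z₁ z₂ u)
    (hf_diff : ∀ z₁ z₂ u, DifferentiableAt ℝ (f z₁ z₂) u)
    (hf_diff2 : ∀ z₁ z₂ u, DifferentiableAt ℝ (deriv (f z₁ z₂)) u)
    (hf''_bdd : ∀ z₁ z₂ u, |deriv (deriv (f z₁ z₂)) u| ≤ B)
    (k : ℝ → ℝ)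
    (hk_meas : Measurable k)
    (hk_bdd : ∃ Ck, ∀ u, |k u| ≤ Ck)
    (hk_symm : ∀ u, k (-u) = k u)
    (hk_one : ∫ u, k u = 1)
    (hk_mom : Integrable fun u => u ^ 2 * |k u|)
    (α : Fin l → ℝ → ℝ)
    (hα_meas : ∀ l', Measurable (α l'))
    (hα_bdd : ∀ l', ∃ C, ∀ u, |α l' u| ≤ C)
    (G : Matrix (Fin l) (Fin r) ℝ)
    (hG : ∀ i j, i ≠ j → ∀ l' z,
      G l' z = (∫ ω in {ω | sbm.Z i ω = z}, α l' (sbm.X i j ω) ∂ℙ)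
                  / (ℙ {ω | sbm.Z i ω = z}).toReal)
    (l₁ l₂ : Fin l)
    (i₁ i₂ i₃ i₄ : Fin n)
    (h12 : i₁ ≠ i₂) (h13 : i₁ ≠ i₃) (h14 : i₁ ≠ i₄)
    (h23 : i₂ ≠ i₃) (h24 : i₂ ≠ i₄) (h34 : i₃ ≠ i₄) :
    ∃ C : ℝ, ∀ (x h : ℝ), 0 < h →
      |(∫ ω, α l₁ (sbm.X i₁ i₂ ω) * (h⁻¹ * k ((sbm.X i₂ i₃ ω - x) / h))
            * α l₂ (sbm.X i₃ i₄ ω) ∂ℙ)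
          - ∑ z₁, ∑ z₂, G l₁ z₁ * f z₁ z₂ x * sbm.p z₁ * sbm.p z₂ * G l₂ z₂|
        ≤ C * h ^ 2 := by
  have hf : sbm.HasDensity f := ⟨hf_meas, hf_nonneg, hf_density⟩
  obtain ⟨Ck, hCk⟩ := hk_bdd
  obtain ⟨C₁, hC₁⟩ := hα_bdd l₁
  obtain ⟨C₂, hC₂⟩ := hα_bdd l₂
  have hG₁ : ∀ b, ∑ a, sbm.p a * ∫ u, f b a u * α l₁ u = G l₁ b := fun b => by
    rw [hG i₂ i₁ h12.symm, hf.setIntegral_Z_div_measure_eq h12.symm b (hα_meas l₁) hC₁]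
  have hG₂ : ∀ c, ∑ d, sbm.p d * ∫ u, f c d u * α l₂ u = G l₂ c := fun c => by
    rw [hG i₃ i₄ h34, hf.setIntegral_Z_div_measure_eq h34 c (hα_meas l₂) hC₂]
  refine ⟨(∑ b, ∑ c, sbm.p b * sbm.p c * |G l₁ b| * |G l₂ c|) * (B * ∫ v, v ^ 2 * |k v|),
    fun x h hh => ?_⟩
  have hK : ∀ u, |h⁻¹ * k ((u - x) / h)| ≤ h⁻¹ * Ck := fun u => by
    rw [abs_mul, abs_of_pos (inv_pos.2 hh)]
    exact mul_le_mul_of_nonneg_left (hCk _) (inv_pos.2 hh).le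
  rw [hf.integral_path_eq h12 h13 h14 h23 h24 h34 (hα_meas l₁)
    (by fun_prop) (hα_meas l₂) hC₁ hK hC₂, mul_assoc]
  simp only [hG₁, hG₂]
  exact abs_sum_sum_mul_sub_le (fun b => (sbm.p_pos b).le) _ _ fun b c =>
    abs_integral_mul_rescaled_kernel_sub_le (hf_meas b c) (hf_diff b c) (hf_diff2 b c)
      (hf''_bdd b c) hk_meas hk_symm hk_one hk_mom hh x

/-- expectation of the smoothed path-graph statistic. Under the
weighted stochastic block model in which every conditional distribution `F z₁ z₂` admits a
bounded density `f z₁ z₂` that is twice differentiable with second derivative bounded by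
`B`, and with a bounded symmetric kernel `k` integrating to one with finite second
absolute moment, there is a constant `C` such that for all `x` and `h > 0`, and distinct
nodes `i₁, i₂, i₃, i₄`,
`|E(α_{l₁}(X_{i₁,i₂}) h⁻¹ k((X_{i₂,i₃} − x)/h) α_{l₂}(X_{i₃,i₄}))
  − ∑ z₁ z₂, (G) l₁ z₁ * f z₁ z₂ x * p z₁ * p z₂ * (G) l₂ z₂| ≤ C h²`. -/
theorem smoothed_path_graph_expectation
    {Ω : Type} [MeasurableSpace Ω] {ℙ : Measure Ω} {n r l : ℕ}
    (sbm : SBM Ω ℙ n r) (hn : 4 ≤ n)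
    (f : Fin r → Fin r → ℝ → ℝ) (B Cf : ℝ)
    (hf_density : ∀ z₁ z₂ x, sbm.F z₁ z₂ x = ∫ u in Set.Iic x, f z₁ z₂ u)
    (hf_meas : ∀ z₁ z₂, Measurable (f z₁ z₂))
    (hf_nonneg : ∀ z₁ z₂ u, 0 ≤ f z₁ z₂ u)
    (hf_bdd : ∀ z₁ z₂ u, f z₁ z₂ u ≤ Cf)
    (hf_diff : ∀ z₁ z₂ u, DifferentiableAt ℝ (f z₁ z₂) u)
    (hf_diff2 : ∀ z₁ z₂ u, DifferentiableAt ℝ (deriv (f z₁ z₂)) u)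
    (hf''_bdd : ∀ z₁ z₂ u, |deriv (deriv (f z₁ z₂)) u| ≤ B)
    (k : ℝ → ℝ)
    (hk_meas : Measurable k)
    (hk_bdd : ∃ Ck, ∀ u, |k u| ≤ Ck)
    (hk_symm : ∀ u, k (-u) = k u)
    (hk_one : ∫ u, k u = 1)
    (hk_mom : Integrable fun u => u ^ 2 * |k u|)
    (α : Fin l → ℝ → ℝ)
    (hα_meas : ∀ l', Measurable (α l'))
    (hα_bdd : ∀ l', ∃ C, ∀ u, |α l' u| ≤ C)
    (G : Matrix (Fin l) (Fin r) ℝ)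
    (hG : ∀ i j, i ≠ j → ∀ l' z,
      G l' z = (∫ ω in {ω | sbm.Z i ω = z}, α l' (sbm.X i j ω) ∂ℙ)
                  / (ℙ {ω | sbm.Z i ω = z}).toReal)
    (l₁ l₂ : Fin l)
    (i₁ i₂ i₃ i₄ : Fin n)
    (h12 : i₁ ≠ i₂) (h13 : i₁ ≠ i₃) (h14 : i₁ ≠ i₄)
    (h23 : i₂ ≠ i₃) (h24 : i₂ ≠ i₄) (h34 : i₃ ≠ i₄) :
    ∃ C : ℝ, ∀ (x h : ℝ), 0 < h →
      |(∫ ω, α l₁ (sbm.X i₁ i₂ ω) * (h⁻¹ * k ((sbm.X i₂ i₃ ω - x) / h))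
            * α l₂ (sbm.X i₃ i₄ ω) ∂ℙ)
          - ∑ z₁, ∑ z₂, G l₁ z₁ * f z₁ z₂ x * sbm.p z₁ * sbm.p z₂ * G l₂ z₂|
        ≤ C * h ^ 2 :=
  smoothed_path_graph_expectation_general sbm f B hf_density hf_meas hf_nonneg hf_diff hf_diff2
    hf''_bdd k hk_meas hk_bdd hk_symm hk_one hk_mom α hα_meas hα_bdd G hG l₁ l₂ i₁ i₂ i₃ i₄ h12 h13
    h14 h23 h24 h34
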